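/- Under the standing hypotheses, let x ∈ A and let (X_n)_{n≥0} be a decreasing sequence of compact connected subsets of ℝ² such that ⋂_n X_n = {x} and such that X_n \ A is nonempty and connected for every n. For each n let Y_n be the closure in ℝ² of h(X_n \ A). Then (Y_n)_{n≥0} is a decreasing sequence of nonempty compact connected subsets of ℝ², and the intersection ⋂_n Y_n is a singleton {y} with y ∈ B. -/
import Mathlib


/-- Under the standing hypotheses, let `x ∈ A` and let `(Xₙ)` be a decreasing
sequence of compact connected subsets of `ℝ²` with `⋂ₙ Xₙ = {x}` and with `Xₙ \ A` nonempty and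
connected for every `n`. Let `Yₙ` be the closure in `ℝ²` of `h(Xₙ \ A)`. Then `(Yₙ)` is a
decreasing sequence of nonempty compact connected subsets of `ℝ²`, and `⋂ₙ Yₙ` is a singleton
`{y}` with `y ∈ B`. -/
theorem stmt_1 (A B : Set (ℝ × ℝ)) (hA : IsClosed A) (hB : IsClosed B)
    (hAtd : IsTotallyDisconnected A) (hBtd : IsTotallyDisconnected B)
    (h : (Aᶜ : Set (ℝ × ℝ)) ≃ₜ (Bᶜ : Set (ℝ × ℝ)))
    (hcomp : ∀ K : Set (ℝ × ℝ), IsCompact K →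
      IsCompact (closure (Subtype.val '' (h '' (Subtype.val ⁻¹' K)))))
    (x : ℝ × ℝ) (hx : x ∈ A)
    (X : ℕ → Set (ℝ × ℝ))
    (hXdec : ∀ n, X (n + 1) ⊆ X n)
    (hXcpt : ∀ n, IsCompact (X n))
    (hXconn : ∀ n, IsConnected (X n))
    (hXint : (⋂ n, X n) = {x})
    (hXA : ∀ n, (X n \ A).Nonempty ∧ IsConnected (X n \ A))
    (Y : ℕ → Set (ℝ × ℝ))
    (hY : ∀ n, Y n = closure (Subtype.val '' (h '' (Subtype.val ⁻¹' (X n))))) :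
    (∀ n, Y (n + 1) ⊆ Y n) ∧
    (∀ n, (Y n).Nonempty ∧ IsCompact (Y n) ∧ IsConnected (Y n)) ∧
    ∃ y ∈ B, (⋂ n, Y n) = {y} := by
  -- Basic facts about the preimages in the subtype
  have hSimg : ∀ n, Subtype.val '' (Subtype.val ⁻¹' (X n) : Set (Aᶜ : Set (ℝ × ℝ)))
      = X n \ A := by
    intro n
    rw [Set.image_preimage_eq_inter_range, Subtype.range_val, Set.diff_eq]
  have hSne : ∀ n, (Subtype.val ⁻¹' (X n) : Set (Aᶜ : Set (ℝ × ℝ))).Nonempty := by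
    intro n
    obtain ⟨p, hpX, hpA⟩ := (hXA n).1
    exact ⟨⟨p, hpA⟩, hpX⟩
  have hSconn : ∀ n, IsConnected (Subtype.val ⁻¹' (X n) : Set (Aᶜ : Set (ℝ × ℝ))) := by
    intro n
    refine ⟨hSne n, ?_⟩
    have := (hXA n).2.isPreconnected
    rw [← hSimg n] at this
    exact Topology.IsInducing.subtypeVal.isPreconnected_image.mp this
  -- decreasing
  have hYdec : ∀ n, Y (n + 1) ⊆ Y n := by
    intro n
    rw [hY n, hY (n + 1)]
    exact closure_mono (Set.image_mono (Set.image_mono (Set.preimage_mono (hXdec n))))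
  -- nonempty, compact, connected
  have hYne : ∀ n, (Y n).Nonempty := by
    intro n
    rw [hY n]
    obtain ⟨s, hs⟩ := hSne n
    exact ⟨_, subset_closure ⟨_, ⟨_, hs, rfl⟩, rfl⟩⟩
  have hYcpt : ∀ n, IsCompact (Y n) := fun n => (hY n) ▸ hcomp (X n) (hXcpt n)
  have hYcl : ∀ n, IsClosed (Y n) := fun n => (hY n) ▸ isClosed_closure
  have hYconn : ∀ n, IsConnected (Y n) := by
    intro n
    rw [hY n, ← Set.image_comp]
    refine IsConnected.closure ?_
    exact (hSconn n).image _ (continuous_subtype_val.comp h.continuous).continuousOn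
  refine ⟨hYdec, fun n => ⟨hYne n, hYcpt n, hYconn n⟩, ?_⟩
  -- the intersection
  set C := ⋂ n, Y n with hC
  have hCcl : IsClosed C := isClosed_iInter hYcl
  have hCcpt : IsCompact C := (hYcpt 0).of_isClosed_subset hCcl (Set.iInter_subset _ 0)
  have hCne : C.Nonempty :=
    IsCompact.nonempty_iInter_of_sequence_nonempty_isCompact_isClosed Y hYdec hYne
      (hYcpt 0) hYcl
  -- C ⊆ B
  have hCB : C ⊆ B := by
    intro z hz
    by_contra hzB
    have hzB' : z ∈ (Bᶜ : Set (ℝ × ℝ)) := hzB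
    set zB : (Bᶜ : Set (ℝ × ℝ)) := ⟨z, hzB'⟩ with hzBdef
    have hw : ∀ n, (h.symm zB : ℝ × ℝ) ∈ X n := by
      intro n
      have hz1 : z ∈ Y n := Set.mem_iInter.mp hz n
      rw [hY n] at hz1
      have hz2 : zB ∈ closure (h '' (Subtype.val ⁻¹' (X n))) := by
        rw [closure_subtype]
        exact hz1
      have hz3 : h.symm zB ∈ closure (h.symm '' (h '' (Subtype.val ⁻¹' (X n)))) := by
        rw [← h.symm.image_closure]
        exact ⟨zB, hz2, rfl⟩
      have himg : ⇑h.symm '' (⇑h '' (Subtype.val ⁻¹' (X n))) = Subtype.val ⁻¹' (X n) := by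
        ext a
        simp only [Set.mem_image]
        constructor
        · rintro ⟨b, ⟨c, hc, rfl⟩, rfl⟩
          simpa using hc
        · intro ha
          exact ⟨h a, ⟨a, ha, rfl⟩, by simp⟩
      rw [himg] at hz3
      have hz4 : (h.symm zB : ℝ × ℝ) ∈
          closure (Subtype.val '' (Subtype.val ⁻¹' (X n) : Set (Aᶜ : Set (ℝ × ℝ)))) := by
        rw [← closure_subtype]
        exact hz3
      have : closure (Subtype.val '' (Subtype.val ⁻¹' (X n) : Set (Aᶜ : Set (ℝ × ℝ))))
          ⊆ X n := by
        rw [hSimg n]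
        exact (hXcpt n).isClosed.closure_subset_iff.mpr Set.diff_subset
      exact this hz4
    have : (h.symm zB : ℝ × ℝ) ∈ ({x} : Set (ℝ × ℝ)) := by
      rw [← hXint]; exact Set.mem_iInter.mpr hw
    have hxA : (h.symm zB : ℝ × ℝ) ∈ (Aᶜ : Set (ℝ × ℝ)) := (h.symm zB).2
    rw [Set.mem_singleton_iff] at this
    rw [this] at hxA
    exact hxA hx
  -- C is preconnected
  have hCconn : IsPreconnected C := by
    rw [isPreconnected_iff_subset_of_fully_disjoint_closed hCcl]
    intro t1 t2 ht1 ht2 hcov hdis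
    by_contra hcon
    push_neg at hcon
    obtain ⟨hn1, hn2⟩ := hcon
    have hF1 : (C ∩ t1).Nonempty := by
      rw [Set.not_subset] at hn2
      obtain ⟨a, haC, hat2⟩ := hn2
      exact ⟨a, haC, (hcov haC).resolve_right hat2⟩
    have hF2 : (C ∩ t2).Nonempty := by
      rw [Set.not_subset] at hn1
      obtain ⟨a, haC, hat1⟩ := hn1
      exact ⟨a, haC, (hcov haC).resolve_left hat1⟩
    obtain ⟨U, V, hUo, hVo, hF1U, hF2V, hUV⟩ :=
      normal_separation (hCcl.inter ht1) (hCcl.inter ht2)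
        (hdis.mono Set.inter_subset_right Set.inter_subset_right)
    have hCUV : C ⊆ U ∪ V := by
      intro a haC
      rcases hcov haC with h1 | h2
      · exact Or.inl (hF1U ⟨haC, h1⟩)
      · exact Or.inr (hF2V ⟨haC, h2⟩)
    -- some Y N is contained in U ∪ V
    have hK : ∃ N, Y N ∩ (U ∪ V)ᶜ = ∅ := by
      by_contra hK
      push_neg at hK
      have := IsCompact.nonempty_iInter_of_sequence_nonempty_isCompact_isClosed
        (fun n => Y n ∩ (U ∪ V)ᶜ)
        (fun n => Set.inter_subset_inter_left _ (hYdec n))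
        (fun n => hK n)
        ((hYcpt 0).inter_right (isClosed_compl_iff.mpr (hUo.union hVo)))
        (fun n => (hYcl n).inter (isClosed_compl_iff.mpr (hUo.union hVo)))
      obtain ⟨a, ha⟩ := this
      rw [← Set.iInter_inter] at ha
      exact ha.2 (hCUV ha.1)
    obtain ⟨N, hN⟩ := hK
    have hYNsub : Y N ⊆ U ∪ V := by
      intro a haY
      by_contra hcom
      exact Set.eq_empty_iff_forall_notMem.mp hN a ⟨haY, hcom⟩
    have hYU : (Y N ∩ U).Nonempty := by
      obtain ⟨a, haC, hat⟩ := hF1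
      exact ⟨a, Set.mem_iInter.mp haC N, hF1U ⟨haC, hat⟩⟩
    have hYV : (Y N ∩ V).Nonempty := by
      obtain ⟨a, haC, hat⟩ := hF2
      exact ⟨a, Set.mem_iInter.mp haC N, hF2V ⟨haC, hat⟩⟩
    obtain ⟨a, haY, haU, haV⟩ := (hYconn N).isPreconnected U V hUo hVo hYNsub hYU hYV
    exact Set.disjoint_left.mp hUV haU haV
  -- conclude: C is a subsingleton of B, nonempty, hence a singleton
  have hsub : C.Subsingleton := hBtd C hCB hCconn
  obtain ⟨y, hy⟩ := hCne
  exact ⟨y, hCB hy, (hsub.eq_singleton_of_mem hy)⟩
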